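/- Let d ≥ 1 and l ≥ 1 be integers with l not dividing 2d, and let a, b ∈ ℤ. Then the l-th cyclotomic polynomial σ_l divides [a + lb]_{v^d} − [a]_{v^d} in ℤ[v,v⁻¹]. -/
import Mathlib


/-!
Work inside `ℚ(v)` (realized as `RatFunc ℚ` with `v = RatFunc.X`).
`𝒵 = ℤ[v,v⁻¹]` is the subalgebra generated by `v` and `v⁻¹`, and
`qd d m = [m]_{v^d} = (v^{dm} − v^{−dm})/(v^d − v^{−d})`.
`σ_l` denotes the `l`-th cyclotomic polynomial, regarded in `ℚ(v)`.

STATEMENT: for integers `d ≥ 1`, `l ≥ 1` with `l ∤ 2d` and all `a b : ℤ`,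
`σ_l` divides `[a + lb]_{v^d} − [a]_{v^d}` in `ℤ[v,v⁻¹]`.
-/

noncomputable section

/-- `𝒵 = ℤ[v,v⁻¹]` realized as a subalgebra of `𝒬 = ℚ(v)`. -/
def ZZ : Subalgebra ℤ (RatFunc ℚ) := Algebra.adjoin ℤ {RatFunc.X, RatFunc.X⁻¹}

/-- The quantum integer `[m]_{v^d}` in `ℚ(v)`. -/
def qd (d : ℕ) (m : ℤ) : RatFunc ℚ :=
  (RatFunc.X ^ ((d : ℤ) * m) - RatFunc.X ^ (-((d : ℤ) * m))) /
    (RatFunc.X ^ (d : ℤ) - RatFunc.X ^ (-(d : ℤ)))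

/-- The `l`-th cyclotomic polynomial `σ_l`, regarded as an element of `ℚ(v)`. -/
def cycl (l : ℕ) : RatFunc ℚ := Polynomial.aeval RatFunc.X (Polynomial.cyclotomic l ℤ)

local notation "V" => (RatFunc.X : RatFunc ℚ)

lemma hV : (RatFunc.X : RatFunc ℚ) ≠ 0 := RatFunc.X_ne_zero

lemma V_mem : V ∈ ZZ := Algebra.subset_adjoin (by simp)

lemma Vinv_mem : V⁻¹ ∈ ZZ := Algebra.subset_adjoin (by simp)

lemma V_zpow_mem (m : ℤ) : V ^ m ∈ ZZ := by
  rcases m.eq_nat_or_neg with ⟨n, rfl | rfl⟩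
  · rw [zpow_natCast]; exact pow_mem V_mem n
  · rw [zpow_neg, zpow_natCast, ← inv_pow]; exact pow_mem Vinv_mem n

lemma aeval_mem (p : Polynomial ℤ) : Polynomial.aeval V p ∈ ZZ := by
  have h : Polynomial.aeval V p ∈ Algebra.adjoin ℤ {V} := by
    rw [Algebra.adjoin_singleton_eq_range_aeval]; exact ⟨p, rfl⟩
  exact Algebra.adjoin_mono (by simp) h

lemma V_pow_ne_one {n : ℕ} (hn : 0 < n) : (V : RatFunc ℚ) ^ n ≠ 1 := by
  intro h
  have h2 : (Polynomial.X : Polynomial ℚ) ^ n = 1 := by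
    apply RatFunc.algebraMap_injective ℚ
    rw [map_pow, map_one, RatFunc.algebraMap_X, h]
  exact Polynomial.X_pow_sub_C_ne_zero hn (1 : ℚ) (by rw [map_one, sub_eq_zero, h2])

lemma V_pow_sub_one_ne_zero {n : ℕ} (hn : 0 < n) : (V : RatFunc ℚ) ^ n - 1 ≠ 0 :=
  sub_ne_zero.mpr (V_pow_ne_one hn)

lemma hdelta {e : ℕ} (he : 1 ≤ e) : V ^ ((e : ℤ)) - V ^ (-(e : ℤ)) ≠ 0 := by
  intro h
  have h1 : V ^ ((e : ℤ)) = V ^ (-(e : ℤ)) := sub_eq_zero.mp h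
  have h2 : V ^ ((e : ℤ)) * V ^ ((e : ℤ)) = V ^ (-(e : ℤ)) * V ^ ((e : ℤ)) := by rw [h1]
  rw [← zpow_add₀ hV, ← zpow_add₀ hV, neg_add_cancel, zpow_zero] at h2
  have h3 : V ^ (2 * e) = 1 := by
    rw [← h2, ← zpow_natCast]
    push_cast
    rw [two_mul, zpow_add₀ hV]
  exact V_pow_ne_one (by omega) h3

open Polynomial in
lemma lemA {d l : ℕ} (hd : 1 ≤ d) (hl : 1 ≤ l) (hnd : ¬ (l ∣ 2 * d)) :
    ∃ R : Polynomial ℤ, (Polynomial.X : Polynomial ℤ) ^ (2 * d * l) - 1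
      = Polynomial.cyclotomic l ℤ * ((Polynomial.X ^ (2 * d) - 1) * R) := by
  have h1 : (0:ℕ) < 2 * d := by omega
  have h2 : (0:ℕ) < 2 * d * l := by positivity
  have hsub : insert l (2*d).divisors ⊆ (2*d*l).divisors := by
    intro e he
    rcases Finset.mem_insert.mp he with rfl | he
    · exact Nat.mem_divisors.mpr ⟨Dvd.intro (2*d) (mul_comm _ _), h2.ne'⟩
    · obtain ⟨hdvd, _⟩ := Nat.mem_divisors.mp he
      exact Nat.mem_divisors.mpr ⟨hdvd.mul_right l, h2.ne'⟩
  have hnm : l ∉ (2*d).divisors := fun h => hnd (Nat.mem_divisors.mp h).1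
  have hdvd := Finset.prod_dvd_prod_of_subset _ _ (fun i => Polynomial.cyclotomic i ℤ) hsub
  rw [Finset.prod_insert hnm, Polynomial.prod_cyclotomic_eq_X_pow_sub_one h1,
    Polynomial.prod_cyclotomic_eq_X_pow_sub_one h2] at hdvd
  obtain ⟨R, hR⟩ := hdvd
  exact ⟨R, by rw [hR]; ring⟩

lemma lemB {l n : ℕ} (h : l ∣ n) :
    ∃ Q : Polynomial ℤ, (Polynomial.X : Polynomial ℤ) ^ n - 1
      = Polynomial.cyclotomic l ℤ * Q := by
  obtain ⟨k, rfl⟩ := h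
  have h1 : (Polynomial.X : Polynomial ℤ) ^ l - 1 ∣ Polynomial.X ^ (l * k) - 1 := by
    rw [pow_mul]
    simpa using sub_dvd_pow_sub_pow ((Polynomial.X : Polynomial ℤ) ^ l) 1 k
  exact (Polynomial.cyclotomic.dvd_X_pow_sub_one l ℤ).trans h1

/-- σ_l divides V^N - 1 in ZZ, whenever l ∣ N. -/
lemma cycl_dvd_zpow_sub_one (l : ℕ) (N : ℤ) (h : (l : ℤ) ∣ N) :
    ∃ z ∈ ZZ, V ^ N - 1 = cycl l * z := by
  have key : ∀ n : ℕ, l ∣ n → ∃ z ∈ ZZ, V ^ (n : ℤ) - 1 = cycl l * z := by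
    intro n hn
    obtain ⟨Q, hQ⟩ := lemB hn
    refine ⟨Polynomial.aeval V Q, aeval_mem Q, ?_⟩
    have := congrArg (Polynomial.aeval V) hQ
    simp only [map_sub, map_mul, map_pow, map_one, Polynomial.aeval_X] at this
    rw [zpow_natCast, this, cycl]
  rcases le_or_gt 0 N with hN | hN
  · obtain ⟨n, rfl⟩ := Int.eq_ofNat_of_zero_le hN
    exact key n (Int.ofNat_dvd.mp h)
  · obtain ⟨z, hz, hz2⟩ := key (-N).toNat (by
      have : (l : ℤ) ∣ (-N) := (dvd_neg).mpr h
      exact Int.ofNat_dvd.mp (by rwa [Int.toNat_of_nonneg (by omega)]))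
    rw [Int.toNat_of_nonneg (by omega : (0:ℤ) ≤ -N)] at hz2
    refine ⟨-(V ^ N * z), neg_mem (mul_mem (V_zpow_mem N) hz), ?_⟩
    have hmul : V ^ N * V ^ (-N) = 1 := by rw [← zpow_add₀ hV]; simp
    linear_combination (-(V ^ N : RatFunc ℚ)) * hz2 + hmul

/-- Closed form for quantum integers of naturals. -/
lemma qd_natCast (e : ℕ) (he : 1 ≤ e) (n : ℕ) :
    qd e (n : ℤ) = V ^ ((e : ℤ) * (1 - (n : ℤ))) *
      ∑ k ∈ Finset.range n, ((V : RatFunc ℚ) ^ (2 * e)) ^ k := by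
  rw [qd, div_eq_iff (hdelta he)]
  have hG := geom_sum_mul ((V : RatFunc ℚ) ^ (2 * e)) n
  set G : RatFunc ℚ := ∑ k ∈ Finset.range n, ((V : RatFunc ℚ) ^ (2 * e)) ^ k with hGdef
  have hx : (V : RatFunc ℚ) ^ (2 * e) = (V ^ ((e : ℤ))) ^ 2 := by
    rw [← zpow_natCast V (2*e), show ((2*e : ℕ) : ℤ) = (e : ℤ) * 2 by push_cast; ring,
      zpow_mul, show ((2:ℤ)) = ((2:ℕ) : ℤ) from rfl, zpow_natCast]
  have hxn : ((V : RatFunc ℚ) ^ (2 * e)) ^ n = (V ^ ((e : ℤ) * (n : ℤ))) ^ 2 := by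
    rw [← pow_mul, ← zpow_natCast V (2*e*n),
      show ((2*e*n : ℕ) : ℤ) = ((e : ℤ) * (n : ℤ)) * 2 by push_cast; ring,
      zpow_mul, show ((2:ℤ)) = ((2:ℕ) : ℤ) from rfl, zpow_natCast]
  rw [hxn, hx] at hG
  have hS : V ^ ((e : ℤ) * (1 - (n : ℤ))) = V ^ ((e : ℤ)) * V ^ (-((e : ℤ) * (n : ℤ))) := by
    rw [← zpow_add₀ hV]
    congr 1
    ring
  have hP : V ^ ((e : ℤ) * (n : ℤ)) * V ^ (-((e : ℤ) * (n : ℤ))) = 1 := by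
    rw [← zpow_add₀ hV]; simp
  have hE : V ^ ((e : ℤ)) * V ^ (-(e : ℤ)) = 1 := by
    rw [← zpow_add₀ hV]; simp
  rw [hS]
  linear_combination (-(V ^ (-((e : ℤ) * (n : ℤ))))) * hG +
    (-(V ^ ((e : ℤ) * (n : ℤ)))) * hP + (G * V ^ (-((e : ℤ) * (n : ℤ)))) * hE

lemma qd_neg (e : ℕ) (m : ℤ) : qd e (-m) = - qd e m := by
  rw [qd, qd, mul_neg, neg_neg]
  ring

lemma qd_mem (e : ℕ) (he : 1 ≤ e) (m : ℤ) : qd e m ∈ ZZ := by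
  have key : ∀ n : ℕ, qd e (n : ℤ) ∈ ZZ := by
    intro n
    rw [qd_natCast e he n]
    exact mul_mem (V_zpow_mem _)
      (Subalgebra.sum_mem _ fun k _ => pow_mem (pow_mem V_mem _) k)
  rcases m.eq_nat_or_neg with ⟨n, rfl | rfl⟩
  · exact key n
  · rw [qd_neg]
    exact neg_mem (key n)
/-- σ_l divides the quantum integer [l]_{v^d}. -/
lemma cycl_dvd_qd_l {d l : ℕ} (hd : 1 ≤ d) (hl : 1 ≤ l) (hnd : ¬ (l ∣ 2 * d)) :
    ∃ z ∈ ZZ, qd d (l : ℤ) = cycl l * z := by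
  obtain ⟨R, hR⟩ := lemA hd hl hnd
  have hA : (V : RatFunc ℚ) ^ (2 * d * l) - 1
      = cycl l * (((V : RatFunc ℚ) ^ (2 * d) - 1) * Polynomial.aeval V R) := by
    have := congrArg (Polynomial.aeval V) hR
    simpa only [map_sub, map_mul, map_pow, map_one, Polynomial.aeval_X, cycl] using this
  have hG := geom_sum_mul ((V : RatFunc ℚ) ^ (2 * d)) l
  rw [← pow_mul] at hG
  set G : RatFunc ℚ := ∑ k ∈ Finset.range l, ((V : RatFunc ℚ) ^ (2 * d)) ^ k with hGdef
  have hcancel : G = cycl l * Polynomial.aeval V R := by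
    apply mul_right_cancel₀ (V_pow_sub_one_ne_zero (show 0 < 2*d by omega))
    rw [hG, hA]; ring
  refine ⟨V ^ ((d : ℤ) * (1 - (l : ℤ))) * Polynomial.aeval V R,
    mul_mem (V_zpow_mem _) (aeval_mem R), ?_⟩
  rw [qd_natCast d hd l, ← hGdef, hcancel]; ring

/-- Multiplicativity: [l*b]_{v^d} = [b]_{v^{dl}} * [l]_{v^d}. -/
lemma qd_mul_eq {d l : ℕ} (hd : 1 ≤ d) (hl : 1 ≤ l) (b : ℤ) :
    qd d ((l : ℤ) * b) = qd (d * l) b * qd d (l : ℤ) := by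
  have h2 : V ^ (((d * l : ℕ) : ℤ)) - V ^ (-((d * l : ℕ) : ℤ)) ≠ 0 :=
    hdelta (show 1 ≤ d * l from Nat.one_le_iff_ne_zero.mpr (by positivity))
  rw [qd, qd, qd]
  rw [show ((d * l : ℕ) : ℤ) = (d : ℤ) * (l : ℤ) by push_cast; ring] at h2 ⊢
  rw [show (d : ℤ) * ((l : ℤ) * b) = (d : ℤ) * (l : ℤ) * b from (mul_assoc _ _ _).symm]
  rw [div_mul_div_comm,
    mul_comm (V ^ ((d:ℤ)*(l:ℤ)*b) - V ^ (-((d:ℤ)*(l:ℤ)*b)))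
      (V ^ ((d:ℤ)*(l:ℤ)) - V ^ (-((d:ℤ)*(l:ℤ)))),
    mul_div_mul_left _ _ h2]

/-- Decomposition: [a+c] - [a] = (v^{dc} - 1)[a] + v^{-da}[c]. -/
lemma qd_decomp {d : ℕ} (a c : ℤ) :
    qd d (a + c) - qd d a
      = (V ^ ((d : ℤ) * c) - 1) * qd d a + V ^ (-((d : ℤ) * a)) * qd d c := by
  have e1 : V ^ ((d : ℤ) * (a + c)) = V ^ ((d : ℤ) * a) * V ^ ((d : ℤ) * c) := by
    rw [← zpow_add₀ hV, mul_add]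
  have e2 : V ^ (-((d : ℤ) * (a + c))) = V ^ (-((d : ℤ) * a)) * V ^ (-((d : ℤ) * c)) := by
    rw [← zpow_add₀ hV]; congr 1; ring
  rw [qd, qd, qd, e1, e2]
  ring


theorem cyclotomic_dvd_qd_sub (d l : ℕ) (hd : 1 ≤ d) (hl : 1 ≤ l) (hnd : ¬ (l ∣ 2 * d))
    (a b : ℤ) :
    ∃ z ∈ ZZ, qd d (a + (l : ℤ) * b) - qd d a = cycl l * z := by
  obtain ⟨z1, hz1m, hz1⟩ := cycl_dvd_zpow_sub_one l ((d : ℤ) * ((l : ℤ) * b))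
    ⟨(d : ℤ) * b, by ring⟩
  obtain ⟨z2, hz2m, hz2⟩ := cycl_dvd_qd_l hd hl hnd
  refine ⟨z1 * qd d a + V ^ (-((d : ℤ) * a)) * qd (d * l) b * z2,
    add_mem (mul_mem hz1m (qd_mem d hd a))
      (mul_mem (mul_mem (V_zpow_mem _) (qd_mem (d * l)
        (Nat.one_le_iff_ne_zero.mpr (by positivity)) b)) hz2m), ?_⟩
  rw [qd_decomp a ((l : ℤ) * b), qd_mul_eq hd hl b, hz1, hz2]
  ring

end
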